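/- For every formula φ of the fragment νLTL and every infinite word w over 2^Ap: w ⊨ φ if and only if the set of indices {i | af(φ, w_{0i}) ≡_P ff} is finite. (This is the correctness of the deterministic coBüchi automaton A_ν^φ with states Reach(φ), transition function af, initial state φ, and coBüchi condition fin(ff).) -/
import Mathlib


/-- LTL formulas in negation normal form over atomic propositions `Ap`. -/
inductive LTL (Ap : Type) : Type
  | tt : LTL Ap
  | ff : LTL Ap
  | atom (a : Ap) : LTL Ap
  | natom (a : Ap) : LTL Ap
  | conj (φ ψ : LTL Ap) : LTL Ap
  | disj (φ ψ : LTL Ap) : LTL Ap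
  | next (φ : LTL Ap) : LTL Ap
  | fut (φ : LTL Ap) : LTL Ap
  | glob (φ : LTL Ap) : LTL Ap
  | untl (φ ψ : LTL Ap) : LTL Ap
  | wUntl (φ ψ : LTL Ap) : LTL Ap
  | strongRel (φ ψ : LTL Ap) : LTL Ap
  | rel (φ ψ : LTL Ap) : LTL Ap

variable {Ap : Type} [DecidableEq Ap]

/-- The suffix `w_i` of an infinite word. -/
def suffix (w : ℕ → Finset Ap) (i : ℕ) : ℕ → Finset Ap := fun k => w (i + k)

/-- Standard LTL satisfaction over infinite words over `2^Ap`. -/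
def Sat : (ℕ → Finset Ap) → LTL Ap → Prop
  | _, .tt => True
  | _, .ff => False
  | w, .atom a => a ∈ w 0
  | w, .natom a => a ∉ w 0
  | w, .conj φ ψ => Sat w φ ∧ Sat w ψ
  | w, .disj φ ψ => Sat w φ ∨ Sat w ψ
  | w, .next φ => Sat (suffix w 1) φ
  | w, .fut φ => ∃ k, Sat (suffix w k) φ
  | w, .glob φ => ∀ k, Sat (suffix w k) φ
  | w, .untl φ ψ => ∃ k, Sat (suffix w k) ψ ∧ ∀ j < k, Sat (suffix w j) φ
  | w, .wUntl φ ψ =>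
      (∀ k, Sat (suffix w k) φ) ∨ (∃ k, Sat (suffix w k) ψ ∧ ∀ j < k, Sat (suffix w j) φ)
  | w, .strongRel φ ψ => ∃ k, Sat (suffix w k) φ ∧ ∀ j ≤ k, Sat (suffix w j) ψ
  | w, .rel φ ψ =>
      (∀ k, Sat (suffix w k) ψ) ∨ (∃ k, Sat (suffix w k) φ ∧ ∀ j ≤ k, Sat (suffix w j) ψ)

/-- The "after" function on a single letter `ν ∈ 2^Ap`. -/
def afLetter : LTL Ap → Finset Ap → LTL Ap
  | .tt, _ => .tt
  | .ff, _ => .ff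
  | .atom a, ν => if a ∈ ν then .tt else .ff
  | .natom a, ν => if a ∈ ν then .ff else .tt
  | .conj φ ψ, ν => .conj (afLetter φ ν) (afLetter ψ ν)
  | .disj φ ψ, ν => .disj (afLetter φ ν) (afLetter ψ ν)
  | .next φ, _ => φ
  | .fut φ, ν => .disj (afLetter φ ν) (.fut φ)
  | .glob φ, ν => .conj (afLetter φ ν) (.glob φ)
  | .untl φ ψ, ν => .disj (afLetter ψ ν) (.conj (afLetter φ ν) (.untl φ ψ))
  | .wUntl φ ψ, ν => .disj (afLetter ψ ν) (.conj (afLetter φ ν) (.wUntl φ ψ))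
  | .strongRel φ ψ, ν => .conj (afLetter ψ ν) (.disj (afLetter φ ν) (.strongRel φ ψ))
  | .rel φ ψ, ν => .conj (afLetter ψ ν) (.disj (afLetter φ ν) (.rel φ ψ))

/-- The "after" function extended to finite words. -/
def af : LTL Ap → List (Finset Ap) → LTL Ap
  | φ, [] => φ
  | φ, ν :: u => af (afLetter φ ν) u

/-- The finite prefix `w_{0i} = w[0]⋯w[i-1]` of an infinite word. -/
def prefixWord (w : ℕ → Finset Ap) (i : ℕ) : List (Finset Ap) :=
  (List.range i).map w

/-- The finite infix `w_{ij} = w[i]⋯w[j-1]` of an infinite word. -/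
def infixWord (w : ℕ → Finset Ap) (i j : ℕ) : List (Finset Ap) :=
  (List.range (j - i)).map (fun k => w (i + k))

/-- Evaluation of a formula as a propositional formula, where every maximal
proper subformula (root not `∧`/`∨`) is treated as a propositional variable
whose truth value is given by the assignment `v`. -/
def propEval (v : LTL Ap → Prop) : LTL Ap → Prop
  | .tt => True
  | .ff => False
  | .conj φ ψ => propEval v φ ∧ propEval v ψ
  | .disj φ ψ => propEval v φ ∨ propEval v ψ
  | φ => v φ

/-- Propositional equivalence `φ ≡_P ψ`. -/
def propEquiv (φ ψ : LTL Ap) : Prop := ∀ v, propEval v φ ↔ propEval v ψ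

/-- The set of subformulas of a formula (including itself). -/
def subf : LTL Ap → Set (LTL Ap)
  | .tt => {LTL.tt}
  | .ff => {LTL.ff}
  | .atom a => {LTL.atom a}
  | .natom a => {LTL.natom a}
  | .conj φ ψ => insert (.conj φ ψ) (subf φ ∪ subf ψ)
  | .disj φ ψ => insert (.disj φ ψ) (subf φ ∪ subf ψ)
  | .next φ => insert (.next φ) (subf φ)
  | .fut φ => insert (.fut φ) (subf φ)
  | .glob φ => insert (.glob φ) (subf φ)
  | .untl φ ψ => insert (.untl φ ψ) (subf φ ∪ subf ψ)
  | .wUntl φ ψ => insert (.wUntl φ ψ) (subf φ ∪ subf ψ)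
  | .strongRel φ ψ => insert (.strongRel φ ψ) (subf φ ∪ subf ψ)
  | .rel φ ψ => insert (.rel φ ψ) (subf φ ∪ subf ψ)

/-- A formula is proper if its root is not a conjunction or a disjunction. -/
def isProper : LTL Ap → Prop
  | .conj _ _ => False
  | .disj _ _ => False
  | _ => True

/-- The set of proper subformulas of `φ`. -/
def properSubf (φ : LTL Ap) : Set (LTL Ap) := {ψ | ψ ∈ subf φ ∧ isProper ψ}

/-- Formulas whose root is a least-fixed-point operator (`F`, `U`, `M`). -/
def isMu : LTL Ap → Prop
  | .fut _ => True
  | .untl _ _ => True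
  | .strongRel _ _ => True
  | _ => False

/-- Formulas whose root is a greatest-fixed-point operator (`G`, `W`, `R`). -/
def isNu : LTL Ap → Prop
  | .glob _ => True
  | .wUntl _ _ => True
  | .rel _ _ => True
  | _ => False

/-- `μ(φ)`: subformulas of `φ` of the form `Fψ`, `ψ₁Uψ₂`, `ψ₁Mψ₂`. -/
def muSet (φ : LTL Ap) : Set (LTL Ap) := {ψ | ψ ∈ subf φ ∧ isMu ψ}

/-- `ν(φ)`: subformulas of `φ` of the form `Gψ`, `ψ₁Wψ₂`, `ψ₁Rψ₂`. -/
def nuSet (φ : LTL Ap) : Set (LTL Ap) := {ψ | ψ ∈ subf φ ∧ isNu ψ}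

/-- `GF_w = {ψ ∈ μ(φ) | w ⊨ GFψ}`. -/
def GFSet (φ : LTL Ap) (w : ℕ → Finset Ap) : Set (LTL Ap) :=
  {ψ | ψ ∈ muSet φ ∧ Sat w (.glob (.fut ψ))}

/-- `F_w = {ψ ∈ μ(φ) | w ⊨ Fψ}`. -/
def FSet (φ : LTL Ap) (w : ℕ → Finset Ap) : Set (LTL Ap) :=
  {ψ | ψ ∈ muSet φ ∧ Sat w (.fut ψ)}

/-- `FG_w = {ψ ∈ ν(φ) | w ⊨ FGψ}`. -/
def FGSet (φ : LTL Ap) (w : ℕ → Finset Ap) : Set (LTL Ap) :=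
  {ψ | ψ ∈ nuSet φ ∧ Sat w (.fut (.glob ψ))}

/-- `G_w = {ψ ∈ ν(φ) | w ⊨ Gψ}`. -/
def GSet (φ : LTL Ap) (w : ℕ → Finset Ap) : Set (LTL Ap) :=
  {ψ | ψ ∈ nuSet φ ∧ Sat w (.glob ψ)}

open scoped Classical in
/-- `φ[X]_ν`. -/
noncomputable def evalNu (X : Set (LTL Ap)) : LTL Ap → LTL Ap
  | .tt => .tt
  | .ff => .ff
  | .atom a => .atom a
  | .natom a => .natom a
  | .conj φ ψ => .conj (evalNu X φ) (evalNu X ψ)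
  | .disj φ ψ => .disj (evalNu X φ) (evalNu X ψ)
  | .next φ => .next (evalNu X φ)
  | .glob φ => .glob (evalNu X φ)
  | .wUntl φ ψ => .wUntl (evalNu X φ) (evalNu X ψ)
  | .rel φ ψ => .rel (evalNu X φ) (evalNu X ψ)
  | .fut φ => if LTL.fut φ ∈ X then .tt else .ff
  | .untl φ ψ => if LTL.untl φ ψ ∈ X then .wUntl (evalNu X φ) (evalNu X ψ) else .ff
  | .strongRel φ ψ => if LTL.strongRel φ ψ ∈ X then .rel (evalNu X φ) (evalNu X ψ) else .ff

open scoped Classical in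
/-- `φ[Y]_μ`. -/
noncomputable def evalMu (Y : Set (LTL Ap)) : LTL Ap → LTL Ap
  | .tt => .tt
  | .ff => .ff
  | .atom a => .atom a
  | .natom a => .natom a
  | .conj φ ψ => .conj (evalMu Y φ) (evalMu Y ψ)
  | .disj φ ψ => .disj (evalMu Y φ) (evalMu Y ψ)
  | .next φ => .next (evalMu Y φ)
  | .fut φ => .fut (evalMu Y φ)
  | .untl φ ψ => .untl (evalMu Y φ) (evalMu Y ψ)
  | .strongRel φ ψ => .strongRel (evalMu Y φ) (evalMu Y ψ)
  | .glob φ => if LTL.glob φ ∈ Y then .tt else .ff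
  | .wUntl φ ψ => if LTL.wUntl φ ψ ∈ Y then .tt else .untl (evalMu Y φ) (evalMu Y ψ)
  | .rel φ ψ => if LTL.rel φ ψ ∈ Y then .tt else .strongRel (evalMu Y φ) (evalMu Y ψ)

/-- Concatenation `u·w` of a finite word and an infinite word. -/
def wordAppend (u : List (Finset Ap)) (w : ℕ → Finset Ap) : ℕ → Finset Ap :=
  fun i => if h : i < u.length then u.get ⟨i, h⟩ else w (i - u.length)

/-- The smallest set of formulas containing `tt`, `ff` and all elements of `S`
that is closed under conjunction and disjunction. -/
inductive PosBool (S : Set (LTL Ap)) : LTL Ap → Prop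
  | tt : PosBool S .tt
  | ff : PosBool S .ff
  | base {ψ : LTL Ap} : ψ ∈ S → PosBool S ψ
  | conj {φ ψ : LTL Ap} : PosBool S φ → PosBool S ψ → PosBool S (.conj φ ψ)
  | disj {φ ψ : LTL Ap} : PosBool S φ → PosBool S ψ → PosBool S (.disj φ ψ)

/-- `Reach(φ)`: the set of `≡_P`-equivalence classes of the formulas `af(φ,u)`
over all finite words `u`. -/
def Reach (φ : LTL Ap) : Set (Set (LTL Ap)) :=
  {C | ∃ u : List (Finset Ap), C = {ψ | propEquiv ψ (af φ u)}}

/-- The fragment `μLTL`: only `tt`, `ff`, literals, `∧`, `∨`, `X`, `F`, `U`, `M`. -/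
def inMuLTL : LTL Ap → Prop
  | .tt => True
  | .ff => True
  | .atom _ => True
  | .natom _ => True
  | .conj φ ψ => inMuLTL φ ∧ inMuLTL ψ
  | .disj φ ψ => inMuLTL φ ∧ inMuLTL ψ
  | .next φ => inMuLTL φ
  | .fut φ => inMuLTL φ
  | .untl φ ψ => inMuLTL φ ∧ inMuLTL ψ
  | .strongRel φ ψ => inMuLTL φ ∧ inMuLTL ψ
  | .glob _ => False
  | .wUntl _ _ => False
  | .rel _ _ => False

/-- The fragment `νLTL`: only `tt`, `ff`, literals, `∧`, `∨`, `X`, `G`, `W`, `R`. -/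
def inNuLTL : LTL Ap → Prop
  | .tt => True
  | .ff => True
  | .atom _ => True
  | .natom _ => True
  | .conj φ ψ => inNuLTL φ ∧ inNuLTL ψ
  | .disj φ ψ => inNuLTL φ ∧ inNuLTL ψ
  | .next φ => inNuLTL φ
  | .glob φ => inNuLTL φ
  | .wUntl φ ψ => inNuLTL φ ∧ inNuLTL ψ
  | .rel φ ψ => inNuLTL φ ∧ inNuLTL ψ
  | .fut _ => False
  | .untl _ _ => False
  | .strongRel _ _ => False

section AuxLemmas

variable {Ap : Type} [DecidableEq Ap]

lemma af_conj (a b : LTL Ap) (u : List (Finset Ap)) :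
    af (.conj a b) u = .conj (af a u) (af b u) := by
  induction u generalizing a b with
  | nil => rfl
  | cons ν u ih => simp [af, afLetter, ih]

lemma af_disj (a b : LTL Ap) (u : List (Finset Ap)) :
    af (.disj a b) u = .disj (af a u) (af b u) := by
  induction u generalizing a b with
  | nil => rfl
  | cons ν u ih => simp [af, afLetter, ih]

lemma af_ff (u : List (Finset Ap)) : af (.ff : LTL Ap) u = .ff := by
  induction u with
  | nil => rfl
  | cons ν u ih => simpa [af, afLetter] using ih

lemma af_append (θ : LTL Ap) (u v : List (Finset Ap)) :
    af θ (u ++ v) = af (af θ u) v := by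
  induction u generalizing θ with
  | nil => rfl
  | cons ν u ih => simp [af, ih]

lemma propEval_afLetter (v : LTL Ap → Prop) (ν : Finset Ap) :
    ∀ θ : LTL Ap, propEval v (afLetter θ ν) ↔
      propEval (fun ψ => propEval v (afLetter ψ ν)) θ
  | .tt => by simp [afLetter, propEval]
  | .ff => by simp [afLetter, propEval]
  | .atom a => Iff.rfl
  | .natom a => Iff.rfl
  | .conj a b => by
      simp [afLetter, propEval, propEval_afLetter v ν a, propEval_afLetter v ν b]
  | .disj a b => by
      simp [afLetter, propEval, propEval_afLetter v ν a, propEval_afLetter v ν b]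
  | .next a => Iff.rfl
  | .fut a => Iff.rfl
  | .glob a => Iff.rfl
  | .untl a b => Iff.rfl
  | .wUntl a b => Iff.rfl
  | .strongRel a b => Iff.rfl
  | .rel a b => Iff.rfl

lemma propEquiv_afLetter {α β : LTL Ap} (h : propEquiv α β) (ν : Finset Ap) :
    propEquiv (afLetter α ν) (afLetter β ν) := fun v => by
  rw [propEval_afLetter, propEval_afLetter]; exact h _

lemma propEquiv_af {α β : LTL Ap} (h : propEquiv α β) (u : List (Finset Ap)) :
    propEquiv (af α u) (af β u) := by
  induction u generalizing α β with
  | nil => exact h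
  | cons ν u ih => exact ih (propEquiv_afLetter h ν)

lemma persist {θ : LTL Ap} {u : List (Finset Ap)} (h : propEquiv (af θ u) .ff)
    (v' : List (Finset Ap)) : propEquiv (af θ (u ++ v')) .ff := by
  rw [af_append]
  have := propEquiv_af h v'
  rwa [af_ff] at this

lemma suffix_zero (w : ℕ → Finset Ap) : suffix w 0 = w := by
  funext k; simp [suffix]

lemma suffix_suffix (w : ℕ → Finset Ap) (i j : ℕ) :
    suffix (suffix w i) j = suffix w (i + j) := by
  funext k; simp [suffix, Nat.add_assoc]

lemma prefixWord_succ (w : ℕ → Finset Ap) (i : ℕ) :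
    prefixWord w (i+1) = w 0 :: prefixWord (suffix w 1) i := by
  simp [prefixWord, List.range_succ_eq_map, List.map_map, suffix, Function.comp,
    Nat.add_comm, Nat.succ_eq_add_one]

lemma prefixWord_add (w : ℕ → Finset Ap) (i d : ℕ) :
    prefixWord w (i+d) = prefixWord w i ++ prefixWord (suffix w i) d := by
  simp [prefixWord, List.range_add, List.map_map, suffix, Function.comp]

lemma length_prefixWord (w : ℕ → Finset Ap) (i : ℕ) :
    (prefixWord w i).length = i := by simp [prefixWord]

lemma drop_prefixWord (w : ℕ → Finset Ap) {j m : ℕ} (h : j ≤ m) :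
    (prefixWord w m).drop j = prefixWord (suffix w j) (m - j) := by
  obtain ⟨d, rfl⟩ := Nat.exists_eq_add_of_le h
  rw [prefixWord_add]
  rw [show j + d - j = d by omega]
  rw [List.drop_append_of_le_length (by simp [length_prefixWord])]
  simp [length_prefixWord]

lemma persist_prefix {θ : LTL Ap} {w' : ℕ → Finset Ap} {i n : ℕ}
    (h : propEquiv (af θ (prefixWord w' i)) .ff) (hin : i ≤ n) :
    propEquiv (af θ (prefixWord w' n)) .ff := by
  obtain ⟨d, rfl⟩ := Nat.exists_eq_add_of_le hin
  rw [prefixWord_add]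
  exact persist h _

lemma equiv_ff_iff {α : LTL Ap} : propEquiv α .ff ↔ ∀ v, ¬ propEval v α := by
  unfold propEquiv
  simp [propEval]

lemma propEval_Sat (w : ℕ → Finset Ap) :
    ∀ θ : LTL Ap, propEval (Sat w) θ ↔ Sat w θ
  | .tt => by simp [propEval, Sat]
  | .ff => by simp [propEval, Sat]
  | .atom a => Iff.rfl
  | .natom a => Iff.rfl
  | .conj a b => by
      simp [propEval, Sat, propEval_Sat w a, propEval_Sat w b]
  | .disj a b => by
      simp [propEval, Sat, propEval_Sat w a, propEval_Sat w b]
  | .next a => Iff.rfl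
  | .fut a => Iff.rfl
  | .glob a => Iff.rfl
  | .untl a b => Iff.rfl
  | .wUntl a b => Iff.rfl
  | .strongRel a b => Iff.rfl
  | .rel a b => Iff.rfl

lemma inNuLTL_afLetter : ∀ {φ : LTL Ap}, inNuLTL φ → ∀ ν, inNuLTL (afLetter φ ν)
  | .tt, _, ν => trivial
  | .ff, _, ν => trivial
  | .atom a, _, ν => by by_cases h : a ∈ ν <;> simp [afLetter, h, inNuLTL]
  | .natom a, _, ν => by by_cases h : a ∈ ν <;> simp [afLetter, h, inNuLTL]
  | .conj a b, h, ν => ⟨inNuLTL_afLetter h.1 ν, inNuLTL_afLetter h.2 ν⟩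
  | .disj a b, h, ν => ⟨inNuLTL_afLetter h.1 ν, inNuLTL_afLetter h.2 ν⟩
  | .next a, h, ν => h
  | .glob a, h, ν => ⟨inNuLTL_afLetter (φ := a) h ν, h⟩
  | .wUntl a b, h, ν => ⟨inNuLTL_afLetter h.2 ν, inNuLTL_afLetter h.1 ν, h⟩
  | .rel a b, h, ν => ⟨inNuLTL_afLetter h.2 ν, inNuLTL_afLetter h.1 ν, h⟩
  | .fut a, h, ν => h.elim
  | .untl a b, h, ν => h.elim
  | .strongRel a b, h, ν => h.elim

/-- Expansion for `G`. -/
lemma gExp (P : ℕ → Prop) : (∀ k, P k) ↔ P 0 ∧ ∀ k, P (1 + k) := by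
  constructor
  · exact fun h => ⟨h 0, fun k => h _⟩
  · rintro ⟨h0, hs⟩ k
    cases k with
    | zero => exact h0
    | succ n => have := hs n; rwa [Nat.add_comm] at this

/-- Expansion for `W`. -/
lemma wExp (P Q : ℕ → Prop) :
    ((∀ k, P k) ∨ (∃ k, Q k ∧ ∀ j < k, P j)) ↔
      Q 0 ∨ (P 0 ∧ ((∀ k, P (1+k)) ∨ ∃ k, Q (1+k) ∧ ∀ j < k, P (1+j))) := by
  constructor
  · rintro (h | ⟨k, hQ, hP⟩)
    · exact Or.inr ⟨h 0, Or.inl fun k => h _⟩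
    · cases k with
      | zero => exact Or.inl hQ
      | succ n =>
        refine Or.inr ⟨hP 0 (by omega), Or.inr ⟨n, ?_, fun j hj => ?_⟩⟩
        · rwa [Nat.add_comm]
        · have := hP (1+j) (by omega); exact this
  · rintro (h0 | ⟨hP0, h | ⟨k, hQ, hP⟩⟩)
    · exact Or.inr ⟨0, h0, fun j hj => absurd hj (by omega)⟩
    · refine Or.inl fun k => ?_
      cases k with
      | zero => exact hP0
      | succ n => have := h n; rwa [Nat.add_comm] at this
    · refine Or.inr ⟨k+1, by rwa [Nat.add_comm] at hQ, fun j hj => ?_⟩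
      cases j with
      | zero => exact hP0
      | succ n => have := hP n (by omega); rwa [Nat.add_comm] at this

/-- Expansion for `R`. -/
lemma rExp (P Q : ℕ → Prop) :
    ((∀ k, Q k) ∨ (∃ k, P k ∧ ∀ j ≤ k, Q j)) ↔
      Q 0 ∧ (P 0 ∨ ((∀ k, Q (1+k)) ∨ ∃ k, P (1+k) ∧ ∀ j ≤ k, Q (1+j))) := by
  constructor
  · rintro (h | ⟨k, hP, hQ⟩)
    · exact ⟨h 0, Or.inr (Or.inl fun k => h _)⟩
    · refine ⟨hQ 0 (by omega), ?_⟩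
      cases k with
      | zero => exact Or.inl hP
      | succ n =>
        refine Or.inr (Or.inr ⟨n, by rwa [Nat.add_comm] at hP, fun j hj => ?_⟩)
        have := hQ (1+j) (by omega); exact this
  · rintro ⟨hQ0, hP0 | h | ⟨k, hP, hQ⟩⟩
    · exact Or.inr ⟨0, hP0, fun j hj => Nat.le_zero.mp hj ▸ hQ0⟩
    · refine Or.inl fun k => ?_
      cases k with
      | zero => exact hQ0
      | succ n => have := h n; rwa [Nat.add_comm] at this
    · refine Or.inr ⟨k+1, by rwa [Nat.add_comm] at hP, fun j hj => ?_⟩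
      cases j with
      | zero => exact hQ0
      | succ n => have := hQ n (by omega); rwa [Nat.add_comm] at this

lemma sat_afLetter : ∀ (φ : LTL Ap), inNuLTL φ → ∀ (w : ℕ → Finset Ap),
    Sat w φ ↔ Sat (suffix w 1) (afLetter φ (w 0)) := by
  intro φ
  induction φ with
  | tt => intro _ w; simp [Sat, afLetter]
  | ff => intro _ w; simp [Sat, afLetter]
  | atom a => intro _ w; by_cases h : a ∈ w 0 <;> simp [Sat, afLetter, h]
  | natom a => intro _ w; by_cases h : a ∈ w 0 <;> simp [Sat, afLetter, h]
  | conj a b iha ihb =>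
    intro hφ w
    simp only [Sat, afLetter]
    exact and_congr (iha hφ.1 w) (ihb hφ.2 w)
  | disj a b iha ihb =>
    intro hφ w
    simp only [Sat, afLetter]
    exact or_congr (iha hφ.1 w) (ihb hφ.2 w)
  | next a => intro _ w; exact Iff.rfl
  | fut a _ => intro h; exact h.elim
  | untl a b _ _ => intro h; exact h.elim
  | strongRel a b _ _ => intro h; exact h.elim
  | glob a ih =>
    intro hφ w
    have hg := gExp (fun k => Sat (suffix w k) a)
    simp only [Sat, afLetter]
    rw [hg]
    rw [suffix_zero]
    constructor
    · rintro ⟨h0, hs⟩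
      exact ⟨(ih hφ w).mp h0, fun k => by rw [suffix_suffix]; exact hs k⟩
    · rintro ⟨h0, hs⟩
      refine ⟨(ih hφ w).mpr h0, fun k => ?_⟩
      have := hs k; rwa [suffix_suffix] at this
  | wUntl a b iha ihb =>
    intro hφ w
    have hw := wExp (fun k => Sat (suffix w k) a) (fun k => Sat (suffix w k) b)
    simp only [Sat, afLetter]
    rw [hw, suffix_zero]
    constructor
    · rintro (h0 | ⟨hP0, h⟩)
      · exact Or.inl ((ihb hφ.2 w).mp h0)
      · refine Or.inr ⟨(iha hφ.1 w).mp hP0, ?_⟩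
        rcases h with h | ⟨k, hQ, hP⟩
        · exact Or.inl fun k => by rw [suffix_suffix]; exact h k
        · exact Or.inr ⟨k, by rw [suffix_suffix]; exact hQ,
            fun j hj => by rw [suffix_suffix]; exact hP j hj⟩
    · rintro (h0 | ⟨hP0, h⟩)
      · exact Or.inl ((ihb hφ.2 w).mpr h0)
      · refine Or.inr ⟨(iha hφ.1 w).mpr hP0, ?_⟩
        rcases h with h | ⟨k, hQ, hP⟩
        · exact Or.inl fun k => by have := h k; rwa [suffix_suffix] at this
        · exact Or.inr ⟨k, by rwa [suffix_suffix] at hQ,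
            fun j hj => by have := hP j hj; rwa [suffix_suffix] at this⟩
  | rel a b iha ihb =>
    intro hφ w
    have hr := rExp (fun k => Sat (suffix w k) a) (fun k => Sat (suffix w k) b)
    simp only [Sat, afLetter]
    rw [hr, suffix_zero]
    constructor
    · rintro ⟨h0, h⟩
      refine ⟨(ihb hφ.2 w).mp h0, ?_⟩
      rcases h with hP0 | h | ⟨k, hP, hQ⟩
      · exact Or.inl ((iha hφ.1 w).mp hP0)
      · exact Or.inr (Or.inl fun k => by rw [suffix_suffix]; exact h k)
      · exact Or.inr (Or.inr ⟨k, by rw [suffix_suffix]; exact hP,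
          fun j hj => by rw [suffix_suffix]; exact hQ j hj⟩)
    · rintro ⟨h0, h⟩
      refine ⟨(ihb hφ.2 w).mpr h0, ?_⟩
      rcases h with hP0 | h | ⟨k, hP, hQ⟩
      · exact Or.inl ((iha hφ.1 w).mpr hP0)
      · exact Or.inr (Or.inl fun k => by have := h k; rwa [suffix_suffix] at this)
      · exact Or.inr (Or.inr ⟨k, by rwa [suffix_suffix] at hP,
          fun j hj => by have := hQ j hj; rwa [suffix_suffix] at this⟩)

lemma sat_af {φ : LTL Ap} (hφ : inNuLTL φ) (w : ℕ → Finset Ap) :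
    ∀ i, Sat w φ ↔ Sat (suffix w i) (af φ (prefixWord w i)) := by
  intro i
  induction i generalizing φ w with
  | zero => rw [suffix_zero]; rfl
  | succ n ih =>
    rw [prefixWord_succ]
    have h1 := sat_afLetter φ hφ w
    have h2 := ih (inNuLTL_afLetter hφ (w 0)) (suffix w 1)
    rw [h1, h2, suffix_suffix]
    rw [show 1 + n = n + 1 by omega]
    exact Iff.rfl

lemma glob_drop (φ : LTL Ap) : ∀ (u : List (Finset Ap)) (v : LTL Ap → Prop),
    propEval v (af (.glob φ) u) → ∀ j < u.length, propEval v (af φ (u.drop j))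
  | [], v, h, j, hj => absurd hj (by simp)
  | ν :: u, v, h, j, hj => by
    rw [show af (.glob φ) (ν::u) = af (.conj (afLetter φ ν) (.glob φ)) u from rfl,
      af_conj] at h
    simp only [propEval] at h
    obtain ⟨h1, h2⟩ := h
    cases j with
    | zero => exact h1
    | succ n =>
      exact glob_drop φ u v h2 n (by simpa using hj)

lemma wUntl_drop (φ ψ : LTL Ap) : ∀ (u : List (Finset Ap)) (v : LTL Ap → Prop),
    propEval v (af (.wUntl φ ψ) u) →
      (∃ j < u.length, propEval v (af ψ (u.drop j)) ∧
        ∀ j' < j, propEval v (af φ (u.drop j')))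
      ∨ ∀ j < u.length, propEval v (af φ (u.drop j))
  | [], v, h => Or.inr fun j hj => absurd hj (by simp)
  | ν :: u, v, h => by
    rw [show af (.wUntl φ ψ) (ν::u) =
      af (.disj (afLetter ψ ν) (.conj (afLetter φ ν) (.wUntl φ ψ))) u from rfl,
      af_disj, af_conj] at h
    simp only [propEval] at h
    rcases h with h1 | ⟨h2, h3⟩
    · exact Or.inl ⟨0, by simp, h1, fun j' hj' => absurd hj' (by omega)⟩
    · rcases wUntl_drop φ ψ u v h3 with ⟨j, hj, hQ, hP⟩ | hAll
      · refine Or.inl ⟨j+1, by simpa using hj, hQ, fun j' hj' => ?_⟩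
        cases j' with
        | zero => exact h2
        | succ n => exact hP n (by omega)
      · refine Or.inr fun j hj => ?_
        cases j with
        | zero => exact h2
        | succ n => exact hAll n (by simpa using hj)

lemma rel_drop (φ ψ : LTL Ap) : ∀ (u : List (Finset Ap)) (v : LTL Ap → Prop),
    propEval v (af (.rel φ ψ) u) →
      (∃ j < u.length, propEval v (af φ (u.drop j)) ∧
        ∀ j' ≤ j, propEval v (af ψ (u.drop j')))
      ∨ ∀ j < u.length, propEval v (af ψ (u.drop j))
  | [], v, h => Or.inr fun j hj => absurd hj (by simp)
  | ν :: u, v, h => by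
    rw [show af (.rel φ ψ) (ν::u) =
      af (.conj (afLetter ψ ν) (.disj (afLetter φ ν) (.rel φ ψ))) u from rfl,
      af_conj, af_disj] at h
    simp only [propEval] at h
    obtain ⟨hψ0, h2⟩ := h
    rcases h2 with hφ0 | hR
    · refine Or.inl ⟨0, by simp, hφ0, fun j' hj' => ?_⟩
      interval_cases j'
      exact hψ0
    · rcases rel_drop φ ψ u v hR with ⟨j, hj, hP, hQ⟩ | hAll
      · refine Or.inl ⟨j+1, by simpa using hj, hP, fun j' hj' => ?_⟩
        cases j' with
        | zero => exact hψ0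
        | succ n => exact hQ n (by omega)
      · refine Or.inr fun j hj => ?_
        cases j with
        | zero => exact hψ0
        | succ n => exact hAll n (by simpa using hj)

lemma nu_unsat : ∀ (φ : LTL Ap), inNuLTL φ → ∀ (w : ℕ → Finset Ap), ¬ Sat w φ →
    ∃ i, propEquiv (af φ (prefixWord w i)) .ff := by
  intro φ
  induction φ with
  | tt => intro _ w h; exact absurd trivial h
  | ff => intro _ w _; exact ⟨0, fun v => Iff.rfl⟩
  | atom a =>
    intro _ w h
    have ha : a ∉ w 0 := h
    refine ⟨1, ?_⟩
    have : af (.atom a) (prefixWord w 1) = .ff := by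
      rw [show prefixWord w 1 = [w 0] by simp [prefixWord, List.range_succ]]
      simp [af, afLetter, ha]
    rw [this]
    exact fun v => Iff.rfl
  | natom a =>
    intro _ w h
    have ha : a ∈ w 0 := not_not.mp h
    refine ⟨1, ?_⟩
    have : af (.natom a) (prefixWord w 1) = .ff := by
      rw [show prefixWord w 1 = [w 0] by simp [prefixWord, List.range_succ]]
      simp [af, afLetter, ha]
    rw [this]
    exact fun v => Iff.rfl
  | conj a b iha ihb =>
    intro hφ w h
    by_cases hs : Sat w a
    · have hb : ¬ Sat w b := fun hb => h ⟨hs, hb⟩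
      obtain ⟨i, hi⟩ := ihb hφ.2 w hb
      refine ⟨i, ?_⟩
      rw [af_conj, equiv_ff_iff]
      intro v hv
      simp only [propEval] at hv
      exact equiv_ff_iff.mp hi v hv.2
    · obtain ⟨i, hi⟩ := iha hφ.1 w hs
      refine ⟨i, ?_⟩
      rw [af_conj, equiv_ff_iff]
      intro v hv
      simp only [propEval] at hv
      exact equiv_ff_iff.mp hi v hv.1
  | disj a b iha ihb =>
    intro hφ w h
    have ha : ¬ Sat w a := fun hh => h (Or.inl hh)
    have hb : ¬ Sat w b := fun hh => h (Or.inr hh)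
    obtain ⟨i, hi⟩ := iha hφ.1 w ha
    obtain ⟨j, hj⟩ := ihb hφ.2 w hb
    refine ⟨max i j, ?_⟩
    have hi' := persist_prefix hi (le_max_left i j)
    have hj' := persist_prefix hj (le_max_right i j)
    rw [af_disj, equiv_ff_iff]
    intro v hv
    simp only [propEval] at hv
    rcases hv with hv | hv
    · exact equiv_ff_iff.mp hi' v hv
    · exact equiv_ff_iff.mp hj' v hv
  | next a ih =>
    intro hφ w h
    obtain ⟨i, hi⟩ := ih hφ (suffix w 1) h
    refine ⟨i+1, ?_⟩
    rw [prefixWord_succ]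
    exact hi
  | fut a _ => intro h; exact h.elim
  | untl a b _ _ => intro h; exact h.elim
  | strongRel a b _ _ => intro h; exact h.elim
  | glob a ih =>
    intro hφ w h
    obtain ⟨k, hk⟩ := not_forall.mp h
    obtain ⟨i, hi⟩ := ih hφ (suffix w k) hk
    refine ⟨k + 1 + i, equiv_ff_iff.mpr ?_⟩
    intro v hv
    have hlen : k < (prefixWord w (k+1+i)).length := by rw [length_prefixWord]; omega
    have hj := glob_drop a _ v hv k hlen
    rw [drop_prefixWord w (by omega)] at hj
    have hff := persist_prefix hi (show i ≤ k+1+i-k by omega)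
    exact equiv_ff_iff.mp hff v hj
  | wUntl a b iha ihb =>
    intro hφ w h
    classical
    have h1 : ∃ k, ¬ Sat (suffix w k) a :=
      not_forall.mp (fun hh => h (Or.inl hh))
    set k := Nat.find h1 with hkdef
    have hk : ¬ Sat (suffix w k) a := Nat.find_spec h1
    have hmin : ∀ j < k, Sat (suffix w j) a := fun j hj =>
      not_not.mp (Nat.find_min h1 hj)
    have hQ : ∀ j ≤ k, ¬ Sat (suffix w j) b := by
      intro j hj hQj
      exact h (Or.inr ⟨j, hQj, fun j' hj' => hmin j' (lt_of_lt_of_le hj' hj)⟩)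
    obtain ⟨i0, hi0⟩ := iha hφ.1 (suffix w k) hk
    have hch : ∀ j, j ≤ k → ∃ i, propEquiv (af b (prefixWord (suffix w j) i)) .ff :=
      fun j hj => ihb hφ.2 (suffix w j) (hQ j hj)
    choose f hf using hch
    set g : ℕ → ℕ := fun j => if hj : j ≤ k then j + f j hj else 0 with hgdef
    set m := (k + 1 + i0) + (Finset.range (k+1)).sup g with hmdef
    have hmk : k + 1 + i0 ≤ m := Nat.le_add_right _ _
    have hmg : ∀ j ≤ k, g j ≤ m := by
      intro j hj
      have : g j ≤ (Finset.range (k+1)).sup g :=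
        Finset.le_sup (Finset.mem_range.mpr (by omega))
      omega
    have hmφ : propEquiv (af a (prefixWord (suffix w k) (m - k))) .ff :=
      persist_prefix hi0 (by omega)
    have hmψ : ∀ j (hj : j ≤ k), propEquiv (af b (prefixWord (suffix w j) (m - j))) .ff := by
      intro j hj
      refine persist_prefix (hf j hj) ?_
      have := hmg j hj
      rw [hgdef] at this
      simp only [dif_pos hj] at this
      omega
    refine ⟨m, equiv_ff_iff.mpr ?_⟩
    intro v hv
    have hlen : (prefixWord w m).length = m := length_prefixWord w m
    rcases wUntl_drop a b _ v hv with ⟨j, hjm, hQv, hPv⟩ | hAll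
    · rw [hlen] at hjm
      by_cases hjk : j ≤ k
      · rw [drop_prefixWord w (le_of_lt hjm)] at hQv
        exact equiv_ff_iff.mp (hmψ j hjk) v hQv
      · have hkj : k < j := not_le.mp hjk
        have hPk := hPv k hkj
        rw [drop_prefixWord w (by omega)] at hPk
        exact equiv_ff_iff.mp hmφ v hPk
    · have hPk := hAll k (by rw [hlen]; omega)
      rw [drop_prefixWord w (by omega)] at hPk
      exact equiv_ff_iff.mp hmφ v hPk
  | rel a b iha ihb =>
    intro hφ w h
    classical
    have h1 : ∃ k, ¬ Sat (suffix w k) b :=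
      not_forall.mp (fun hh => h (Or.inl hh))
    set k := Nat.find h1 with hkdef
    have hk : ¬ Sat (suffix w k) b := Nat.find_spec h1
    have hmin : ∀ j < k, Sat (suffix w j) b := fun j hj =>
      not_not.mp (Nat.find_min h1 hj)
    have hP : ∀ j < k, ¬ Sat (suffix w j) a := by
      intro j hj hPj
      exact h (Or.inr ⟨j, hPj, fun j' hj' => hmin j' (lt_of_le_of_lt hj' hj)⟩)
    obtain ⟨i0, hi0⟩ := ihb hφ.2 (suffix w k) hk
    have hch : ∀ j, j < k → ∃ i, propEquiv (af a (prefixWord (suffix w j) i)) .ff :=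
      fun j hj => iha hφ.1 (suffix w j) (hP j hj)
    choose f hf using hch
    set g : ℕ → ℕ := fun j => if hj : j < k then j + f j hj else 0 with hgdef
    set m := (k + 1 + i0) + (Finset.range (k+1)).sup g with hmdef
    have hmk : k + 1 + i0 ≤ m := Nat.le_add_right _ _
    have hmg : ∀ j < k, g j ≤ m := by
      intro j hj
      have : g j ≤ (Finset.range (k+1)).sup g :=
        Finset.le_sup (Finset.mem_range.mpr (by omega))
      omega
    have hmψ : propEquiv (af b (prefixWord (suffix w k) (m - k))) .ff :=
      persist_prefix hi0 (by omega)
    have hmφ : ∀ j (hj : j < k), propEquiv (af a (prefixWord (suffix w j) (m - j))) .ff := by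
      intro j hj
      refine persist_prefix (hf j hj) ?_
      have := hmg j hj
      rw [hgdef] at this
      simp only [dif_pos hj] at this
      omega
    refine ⟨m, equiv_ff_iff.mpr ?_⟩
    intro v hv
    have hlen : (prefixWord w m).length = m := length_prefixWord w m
    rcases rel_drop a b _ v hv with ⟨j, hjm, hPv, hQv⟩ | hAll
    · rw [hlen] at hjm
      by_cases hjk : j < k
      · rw [drop_prefixWord w (le_of_lt hjm)] at hPv
        exact equiv_ff_iff.mp (hmφ j hjk) v hPv
      · have hkj : k ≤ j := not_lt.mp hjk
        have hQk := hQv k hkj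
        rw [drop_prefixWord w (by omega)] at hQk
        exact equiv_ff_iff.mp hmψ v hQk
    · have hQk := hAll k (by rw [hlen]; omega)
      rw [drop_prefixWord w (by omega)] at hQk
      exact equiv_ff_iff.mp hmψ v hQk

end AuxLemmas

/-- for `φ ∈ νLTL`, `w ⊨ φ` iff `{i | af(φ, w_{0i}) ≡_P ff}` is finite. -/
theorem stmt7 {Ap : Type} [DecidableEq Ap] [Fintype Ap]
    (φ : LTL Ap) (hφ : inNuLTL φ) (w : ℕ → Finset Ap) :
    Sat w φ ↔ {i : ℕ | propEquiv (af φ (prefixWord w i)) LTL.ff}.Finite := by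
  constructor
  · intro hs
    have hempty : {i : ℕ | propEquiv (af φ (prefixWord w i)) LTL.ff} = ∅ := by
      ext i
      simp only [Set.mem_setOf_eq, Set.mem_empty_iff_false, iff_false]
      intro hcon
      have hsat : Sat (suffix w i) (af φ (prefixWord w i)) := (sat_af hφ w i).mp hs
      have hpe := (propEval_Sat (suffix w i) _).mpr hsat
      exact (hcon (Sat (suffix w i))).mp hpe
    rw [hempty]
    exact Set.finite_empty
  · intro hfin
    by_contra hns
    obtain ⟨i, hi⟩ := nu_unsat φ hφ w hns
    have hsub : Set.Ici i ⊆ {n : ℕ | propEquiv (af φ (prefixWord w n)) LTL.ff} :=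
      fun n hn => persist_prefix hi hn
    exact ((Set.Ici_infinite i).mono hsub) hfin
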